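/- (Necessity part of Theorem 6.1.) Let F : ℝ³ → ℝ be smooth and U ⊆ ℝ³ open. Suppose there exist a smooth nowhere-vanishing function g : U → ℝ with X_F(g) = (g/2)·∂₁F and a smooth function b : U → ℝ such that on U: (3/2)·X_F²(b) + (3/2)·K₀·b = −g·V(K₀) and (1/2)·X_F³(b) + (1/2)·X_F(K₀)·b + (1/2)·K₀·X_F(b) = g·V'(K₀). Then 4·V'(K₀) + V(X_F(K₀)) = 0 on U. (The two displayed equations arise by evaluating the totally geodesic connection equation on the null directions; their compatibility is the Cartan condition of Theorem 6.1.) -/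

import Mathlib

/-- Partial derivative in the `i`-th coordinate direction on `ℝⁿ = (Fin n → ℝ)`. -/
noncomputable def pd {n : ℕ} (i : Fin n) (f : (Fin n → ℝ) → ℝ) : (Fin n → ℝ) → ℝ :=
  fun x => fderiv ℝ f x (Pi.single i 1)

namespace Order2

/- Coordinates on `ℝ³` are `(t, x₀, x₁)`, i.e. `∂_t = pd 0`, `∂₀ = pd 1`, `∂₁ = pd 2`,
and `x₁` is the coordinate `p 2`. -/

/-- Total derivative `X_F = ∂_t + x₁·∂₀ + F·∂₁` of the ODE `x'' = F(t,x,x')`. -/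
noncomputable def XF (F : (Fin 3 → ℝ) → ℝ) (u : (Fin 3 → ℝ) → ℝ) : (Fin 3 → ℝ) → ℝ :=
  fun p => pd 0 u p + p 2 * pd 1 u p + F p * pd 2 u p

/-- The curvature `K₀ = −∂₀F + (1/2)X_F(∂₁F) − (1/4)(∂₁F)²`. -/
noncomputable def K0 (F : (Fin 3 → ℝ) → ℝ) : (Fin 3 → ℝ) → ℝ :=
  fun p => -(pd 1 F p) + (1/2) * XF F (pd 2 F) p - (1/4) * (pd 2 F p)^2

/-- The operator `V = ∂₁`. -/
noncomputable def V (u : (Fin 3 → ℝ) → ℝ) : (Fin 3 → ℝ) → ℝ := pd 2 u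

/-- The operator `V' = −∂₀ − (1/2)(∂₁F)·∂₁`. -/
noncomputable def V' (F : (Fin 3 → ℝ) → ℝ) (u : (Fin 3 → ℝ) → ℝ) : (Fin 3 → ℝ) → ℝ :=
  fun p => -(pd 1 u p) - (1/2) * pd 2 F p * pd 2 u p

end Order2

section helpers
open Order2 Filter
variable {f h u w F K : (Fin 3 → ℝ) → ℝ} {p : Fin 3 → ℝ} {i : Fin 3}

lemma pd_congr (hfh : f =ᶠ[nhds p] h) : pd i f p = pd i h p := by
  unfold pd; rw [hfh.fderiv_eq]

lemma pd_add (hu : DifferentiableAt ℝ u p) (hw : DifferentiableAt ℝ w p) :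
    pd i (fun q => u q + w q) p = pd i u p + pd i w p := by
  unfold pd; rw [fderiv_fun_add hu hw]; simp

lemma pd_mul (hu : DifferentiableAt ℝ u p) (hw : DifferentiableAt ℝ w p) :
    pd i (fun q => u q * w q) p = pd i u p * w p + u p * pd i w p := by
  unfold pd; rw [fderiv_fun_mul hu hw]; simp [smul_eq_mul]; ring

lemma pd_neg : pd i (fun q => -(u q)) p = -(pd i u p) := by
  unfold pd; rw [fderiv_fun_neg]; simp

lemma pd_const_mul (c : ℝ) (hu : DifferentiableAt ℝ u p) :
    pd i (fun q => c * u q) p = c * pd i u p := by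
  unfold pd; rw [fderiv_const_mul hu]; simp

lemma pd_coord2 : pd 2 (fun q : Fin 3 → ℝ => q 2) p = 1 := by
  unfold pd
  have : (fun q : Fin 3 → ℝ => q 2)
      = (ContinuousLinearMap.proj 2 : (Fin 3 → ℝ) →L[ℝ] ℝ) := rfl
  rw [this, ContinuousLinearMap.fderiv]
  simp

lemma XF_congr (hfh : f =ᶠ[nhds p] h) : XF F f p = XF F h p := by
  unfold XF
  rw [pd_congr (i := 0) hfh, pd_congr (i := 1) hfh, pd_congr (i := 2) hfh]

lemma XF_add (hu : DifferentiableAt ℝ u p) (hw : DifferentiableAt ℝ w p) :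
    XF F (fun q => u q + w q) p = XF F u p + XF F w p := by
  unfold XF
  rw [pd_add (i := 0) hu hw, pd_add (i := 1) hu hw, pd_add (i := 2) hu hw]; ring

lemma XF_mul (hu : DifferentiableAt ℝ u p) (hw : DifferentiableAt ℝ w p) :
    XF F (fun q => u q * w q) p = XF F u p * w p + u p * XF F w p := by
  unfold XF
  rw [pd_mul (i := 0) hu hw, pd_mul (i := 1) hu hw, pd_mul (i := 2) hu hw]; ring

lemma XF_neg : XF F (fun q => -(u q)) p = -(XF F u p) := by
  unfold XF
  rw [pd_neg (i := 0), pd_neg (i := 1), pd_neg (i := 2)]; ring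

lemma XF_const_mul (c : ℝ) (hu : DifferentiableAt ℝ u p) :
    XF F (fun q => c * u q) p = c * XF F u p := by
  unfold XF
  rw [pd_const_mul (i := 0) c hu, pd_const_mul (i := 1) c hu, pd_const_mul (i := 2) c hu]
  ring

lemma contDiffAt_pd (hf : ContDiffAt ℝ (⊤ : ℕ∞) f p) : ContDiffAt ℝ (⊤ : ℕ∞) (pd i f) p := by
  unfold pd
  exact (hf.fderiv_right (m := (⊤ : ℕ∞)) (by simp)).clm_apply contDiffAt_const

lemma contDiffAt_coord : ContDiffAt ℝ (⊤ : ℕ∞) (fun q : Fin 3 → ℝ => q i) p :=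
  (ContinuousLinearMap.proj i : (Fin 3 → ℝ) →L[ℝ] ℝ).contDiff.contDiffAt

lemma contDiffAt_XF (hF : ContDiff ℝ (⊤ : ℕ∞) F) (hu : ContDiffAt ℝ (⊤ : ℕ∞) u p) :
    ContDiffAt ℝ (⊤ : ℕ∞) (XF F u) p := by
  unfold XF
  exact ((contDiffAt_pd hu).add (contDiffAt_coord.mul (contDiffAt_pd hu))).add
    (hF.contDiffAt.mul (contDiffAt_pd hu))

lemma contDiffAt_K0 (hF : ContDiff ℝ (⊤ : ℕ∞) F) : ContDiffAt ℝ (⊤ : ℕ∞) (K0 F) p := by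
  unfold K0
  exact ((contDiffAt_pd hF.contDiffAt).neg.add
      (contDiffAt_const.mul (contDiffAt_XF hF (contDiffAt_pd hF.contDiffAt)))).sub
    (contDiffAt_const.mul ((contDiffAt_pd hF.contDiffAt).pow 2))

lemma pd_comm (hf : ContDiffAt ℝ (⊤ : ℕ∞) f p) (i j : Fin 3) :
    pd i (pd j f) p = pd j (pd i f) p := by
  have hd : DifferentiableAt ℝ (fderiv ℝ f) p :=
    (hf.fderiv_right (m := (⊤ : ℕ∞)) (by simp)).differentiableAt (by simp)
  have h : ∀ k l : Fin 3, pd k (pd l f) p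
      = fderiv ℝ (fderiv ℝ f) p (Pi.single k 1) (Pi.single l 1) := by
    intro k l
    unfold pd
    rw [fderiv_clm_apply hd (differentiableAt_const _)]
    simp
  rw [h, h, hf.isSymmSndFDerivAt (by rw [minSmoothness_of_isRCLikeNormedField]; exact WithTop.coe_le_coe.mpr (le_top : (2 : ℕ∞) ≤ ⊤))]

lemma XF_pd2_comm (hF : ContDiff ℝ (⊤ : ℕ∞) F) (hK : ContDiffAt ℝ (⊤ : ℕ∞) K p) :
    XF F (pd 2 K) p = pd 2 (XF F K) p - pd 1 K p - pd 2 F p * pd 2 K p := by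
  have d0 : DifferentiableAt ℝ (pd 0 K) p := (contDiffAt_pd hK).differentiableAt (by simp)
  have d1 : DifferentiableAt ℝ (pd 1 K) p := (contDiffAt_pd hK).differentiableAt (by simp)
  have d2 : DifferentiableAt ℝ (pd 2 K) p := (contDiffAt_pd hK).differentiableAt (by simp)
  have dF : DifferentiableAt ℝ F p := hF.contDiffAt.differentiableAt (by simp)
  have dc : DifferentiableAt ℝ (fun q : Fin 3 → ℝ => q 2) p :=
    (contDiffAt_coord (i := 2)).differentiableAt (by simp)
  have hexp : pd 2 (XF F K) p
      = pd 2 (pd 0 K) p + (pd 1 K p + p 2 * pd 2 (pd 1 K) p)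
        + (pd 2 F p * pd 2 K p + F p * pd 2 (pd 2 K) p) := by
    show pd 2 (fun q => pd 0 K q + q 2 * pd 1 K q + F q * pd 2 K q) p = _
    rw [pd_add (u := fun q => pd 0 K q + q 2 * pd 1 K q) (w := fun q => F q * pd 2 K q)
        (d0.add (dc.mul d1)) (dF.mul d2),
      pd_add (u := pd 0 K) (w := fun q => q 2 * pd 1 K q) d0 (dc.mul d1),
      pd_mul dc d1, pd_mul dF d2, pd_coord2]
    ring
  have hlhs : XF F (pd 2 K) p
      = pd 0 (pd 2 K) p + p 2 * pd 1 (pd 2 K) p + F p * pd 2 (pd 2 K) p := rfl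
  rw [hlhs, hexp, pd_comm hK 0 2, pd_comm hK 1 2]
  ring

end helpers

open Order2 in
/-- necessity part of Theorem 6.1: if there exist a nowhere-vanishing
solution `g` of `X_F(g) = (g/2)·∂₁F` and a function `b` satisfying the two displayed
equations on `U`, then the Cartan condition `4V'(K₀) + V(X_F(K₀)) = 0` holds on `U`. -/
theorem cartan_condition_order2 (F : (Fin 3 → ℝ) → ℝ) (hF : ContDiff ℝ (⊤ : ℕ∞) F)
    (U : Set (Fin 3 → ℝ)) (hU : IsOpen U)
    (g : (Fin 3 → ℝ) → ℝ) (hg : ContDiffOn ℝ (⊤ : ℕ∞) g U)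
    (hg0 : ∀ p ∈ U, g p ≠ 0)
    (hgeq : ∀ p ∈ U, XF F g p = (g p / 2) * pd 2 F p)
    (b : (Fin 3 → ℝ) → ℝ) (hb : ContDiffOn ℝ (⊤ : ℕ∞) b U)
    (heq1 : ∀ p ∈ U,
      (3/2) * XF F (XF F b) p + (3/2) * K0 F p * b p = -(g p * V (K0 F) p))
    (heq2 : ∀ p ∈ U,
      (1/2) * XF F (XF F (XF F b)) p + (1/2) * XF F (K0 F) p * b p
        + (1/2) * K0 F p * XF F b p = g p * V' F (K0 F) p) :
    ∀ p ∈ U, 4 * V' F (K0 F) p + V (XF F (K0 F)) p = 0 := by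
  intro p hp
  have hmem : U ∈ nhds p := hU.mem_nhds hp
  have hbp : ContDiffAt ℝ (⊤ : ℕ∞) b p := hb.contDiffAt hmem
  have hgp : ContDiffAt ℝ (⊤ : ℕ∞) g p := hg.contDiffAt hmem
  have hKp : ContDiffAt ℝ (⊤ : ℕ∞) (K0 F) p := contDiffAt_K0 hF
  have db : DifferentiableAt ℝ b p := hbp.differentiableAt (by simp)
  have dg : DifferentiableAt ℝ g p := hgp.differentiableAt (by simp)
  have dK : DifferentiableAt ℝ (K0 F) p := hKp.differentiableAt (by simp)
  have dXXb : DifferentiableAt ℝ (XF F (XF F b)) p :=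
    (contDiffAt_XF hF (contDiffAt_XF hF hbp)).differentiableAt (by simp)
  have dVK : DifferentiableAt ℝ (V (K0 F)) p :=
    (contDiffAt_pd (i := 2) hKp).differentiableAt (by simp)
  have hev : (fun q => (3/2) * XF F (XF F b) q + (3/2) * K0 F q * b q)
      =ᶠ[nhds p] (fun q => -(g q * V (K0 F) q)) :=
    Filter.eventuallyEq_of_mem hmem (fun q hq => heq1 q hq)
  have hX := XF_congr (F := F) hev
  have hL : XF F (fun q => (3/2) * XF F (XF F b) q + (3/2) * K0 F q * b q) p
      = (3/2) * XF F (XF F (XF F b)) p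
        + ((3/2) * XF F (K0 F) p * b p + (3/2) * K0 F p * XF F b p) := by
    rw [XF_add (u := fun q => (3/2) * XF F (XF F b) q) (w := fun q => (3/2) * K0 F q * b q)
        (dXXb.const_mul _) ((dK.const_mul _).mul db),
      XF_const_mul _ dXXb,
      XF_mul (u := fun q => (3/2) * K0 F q) (w := b) (dK.const_mul _) db,
      XF_const_mul _ dK]
  have hR : XF F (fun q => -(g q * V (K0 F) q)) p
      = -(XF F g p * V (K0 F) p + g p * XF F (V (K0 F)) p) := by
    rw [XF_neg (u := fun q => g q * V (K0 F) q), XF_mul dg dVK]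
  rw [hL, hR] at hX
  have h2 := heq2 p hp
  have hC := hgeq p hp
  have hD := XF_pd2_comm (p := p) hF hKp
  have key : g p * (4 * V' F (K0 F) p + V (XF F (K0 F)) p) = 0 := by
    simp only [V, V'] at hX h2 ⊢
    linear_combination hX - 3 * h2 - pd 2 (K0 F) p * hC - g p * hD
  exact (mul_eq_zero.mp key).resolve_left (hg0 p hp)
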